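/- For a double ∞-category C, the following conditions are equivalent: (1) the square with horizontal maps C(id,d_0) : C(1,1) → C(1,0) and C(id,d_0) : C(0,1) → C(0,0) and vertical maps C(d_1,id) : C(1,1) → C(0,1) and C(d_1,id) : C(1,0) → C(0,0) is cartesian; (2) C(–,d_0) : C(–,1) → C(–,0) is a left fibration; (3) C(d_1,–) : C(1,–) → C(0,–) is a right fibration; (4) C(–,d_0) : C(–,n) → C(–,0) is a left fibration for all n ≥ 0; (5) C(d_n,–) : C(n,–) → C(0,–) is a right fibration for all n ≥ 0. -/

import Mathlib

open CategoryTheory CategoryTheory.Limits Opposite Simplicial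

universe u v w

namespace Paper

/-! ## Simplicial and bisimplicial spaces -/

variable {S : Type u} [Category.{v} S]

/-- The (inductive form of the) Segal condition for a simplicial space. -/
def IsSegal (X : SimplexCategoryᵒᵖ ⥤ S) : Prop :=
  ∀ n : ℕ, IsPullback
    (X.map (SimplexCategory.mkOfLe (0 : Fin (n + 3)) 1 (by
      simp [Fin.le_def])).op)
    (X.map (SimplexCategory.δ (0 : Fin (n + 3))).op)
    (X.map (SimplexCategory.δ (0 : Fin 2)).op)
    (X.map (SimplexCategory.const ⦋0⦌ ⦋n + 1⦌ 0).op)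

/-- Rezk's completeness condition for a Segal space. -/
def IsComplete [HasFiniteLimits S] (X : SimplexCategoryᵒᵖ ⥤ S) : Prop :=
  IsPullback
    (prod.lift (𝟙 (X.obj (op ⦋0⦌))) (𝟙 (X.obj (op ⦋0⦌))))
    (X.map (SimplexCategory.const ⦋3⦌ ⦋0⦌ 0).op)
    (prod.map (X.map (SimplexCategory.const ⦋1⦌ ⦋0⦌ 0).op)
      (X.map (SimplexCategory.const ⦋1⦌ ⦋0⦌ 0).op))
    (prod.lift (X.map (SimplexCategory.mkOfLe (0 : Fin 4) 2 (by decide)).op)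
      (X.map (SimplexCategory.mkOfLe (1 : Fin 4) 3 (by decide)).op))

/-- A complete Segal space. -/
def IsCSS [HasFiniteLimits S] (X : SimplexCategoryᵒᵖ ⥤ S) : Prop :=
  IsSegal X ∧ IsComplete X

/-- A map of simplicial spaces is a right fibration if the squares formed by the
"last vertex" maps are cartesian. -/
def IsRightFib {X Y : SimplexCategoryᵒᵖ ⥤ S} (F : X ⟶ Y) : Prop :=
  ∀ n : ℕ, IsPullback
    (F.app (op ⦋n⦌))
    (X.map (SimplexCategory.const ⦋0⦌ ⦋n⦌ (Fin.last n)).op)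
    (Y.map (SimplexCategory.const ⦋0⦌ ⦋n⦌ (Fin.last n)).op)
    (F.app (op ⦋0⦌))

/-- A map of simplicial spaces is a left fibration if the squares formed by the
"first vertex" maps are cartesian. -/
def IsLeftFib {X Y : SimplexCategoryᵒᵖ ⥤ S} (F : X ⟶ Y) : Prop :=
  ∀ n : ℕ, IsPullback
    (F.app (op ⦋n⦌))
    (X.map (SimplexCategory.const ⦋0⦌ ⦋n⦌ 0).op)
    (Y.map (SimplexCategory.const ⦋0⦌ ⦋n⦌ 0).op)
    (F.app (op ⦋0⦌))

/-- Bisimplicial spaces valued in `S`. -/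
abbrev BiSp (S : Type u) [Category.{v} S] := SimplexCategoryᵒᵖ ⥤ SimplexCategoryᵒᵖ ⥤ S

/-- The rows `C(m, –)` of a bisimplicial space. -/
def row (C : BiSp S) (m : ℕ) : SimplexCategoryᵒᵖ ⥤ S := C.obj (op ⦋m⦌)

/-- The columns `C(–, n)` of a bisimplicial space. -/
def col (C : BiSp S) (n : ℕ) : SimplexCategoryᵒᵖ ⥤ S := C.flip.obj (op ⦋n⦌)

/-- The map of rows `C(m, –) ⟶ C(m', –)` induced by `g : ⦋m'⦌ ⟶ ⦋m⦌`. -/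
def rowMap (C : BiSp S) {m m' : ℕ} (g : (⦋m'⦌ : SimplexCategory) ⟶ ⦋m⦌) :
    row C m ⟶ row C m' := C.map g.op

/-- The map of columns `C(–, n) ⟶ C(–, n')` induced by `g : ⦋n'⦌ ⟶ ⦋n⦌`. -/
def colMap (C : BiSp S) {n n' : ℕ} (g : (⦋n'⦌ : SimplexCategory) ⟶ ⦋n⦌) :
    col C n ⟶ col C n' := C.flip.map g.op

/-- A double (∞-)category: a bisimplicial space all of whose rows and columns are
complete Segal spaces. -/
def IsDouble [HasFiniteLimits S] (C : BiSp S) : Prop :=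
  (∀ m : ℕ, IsCSS (row C m)) ∧ (∀ n : ℕ, IsCSS (col C n))

/-- The "corner-filling" pullback square condition on a double category, singling
out the factorization double categories. -/
def FactSquare (C : BiSp S) : Prop :=
  IsPullback
    ((C.obj (op ⦋1⦌)).map (SimplexCategory.δ (0 : Fin 2)).op)
    ((C.map (SimplexCategory.δ (1 : Fin 2)).op).app (op ⦋1⦌))
    ((C.map (SimplexCategory.δ (1 : Fin 2)).op).app (op ⦋0⦌))
    ((C.obj (op ⦋0⦌)).map (SimplexCategory.δ (0 : Fin 2)).op)

/-- A factorization double category. -/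
def IsFactDouble [HasFiniteLimits S] (C : BiSp S) : Prop :=
  IsDouble C ∧ FactSquare C

/-- The vertical projection `F(m,–) : D(m,–) ⟶ C(m,–)` of a map of bisimplicial spaces. -/
def rowApp {D C : BiSp S} (F : D ⟶ C) (m : ℕ) : row D m ⟶ row C m := F.app (op ⦋m⦌)

/-- The horizontal projection `F(–,n) : D(–,n) ⟶ C(–,n)` of a map of bisimplicial spaces. -/
def colApp {D C : BiSp S} (F : D ⟶ C) (n : ℕ) : col D n ⟶ col C n where
  app k := (F.app k).app (op ⦋n⦌)
  naturality _ _ f := by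
    have h := F.naturality f
    exact congrArg (fun (t : NatTrans _ _) => t.app (op (⦋n⦌ : SimplexCategory))) h

end Paper

namespace Paper

open SimplexCategory


section Aux

variable {S : Type u} [Category.{v} S]

/-- Gluing lemma for maps of pullback cospans: if `P`, `P'` are the pullbacks of the
two cospans, and the square over the `B`-feet is cartesian, then so is the square
over the `P`-vertices (relative to the `A`-feet). -/
lemma cospan_pullback {P A B Z P' A' B' Z' : S}
    {pA : P ⟶ A} {pB : P ⟶ B} {f : A ⟶ Z} {g : B ⟶ Z}
    {pA' : P' ⟶ A'} {pB' : P' ⟶ B'} {f' : A' ⟶ Z'} {g' : B' ⟶ Z'}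
    {π : P ⟶ P'} {α : A ⟶ A'} {β : B ⟶ B'} {γ : Z ⟶ Z'}
    (hP : IsPullback pA pB f g) (hP' : IsPullback pA' pB' f' g')
    (hB : IsPullback β g g' γ)
    (c1 : π ≫ pA' = pA ≫ α) (c2 : π ≫ pB' = pB ≫ β)
    (c3 : f ≫ γ = α ≫ f') :
    IsPullback π pA pA' α := by
  have big : IsPullback (pB ≫ β) pA g' (f ≫ γ) := hP.flip.paste_horiz hB
  rw [← c2, c3] at big
  exact IsPullback.of_right big c1 hP'.flip

variable (C : BiSp S)

/-- First-variable "vertex 0" restriction `C(m,n) ⟶ C(0,n)`. -/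
def vz (m n : ℕ) : (C.obj (op ⦋m⦌)).obj (op ⦋n⦌) ⟶ (C.obj (op ⦋0⦌)).obj (op ⦋n⦌) :=
  (C.map (SimplexCategory.const ⦋0⦌ ⦋m⦌ 0).op).app (op ⦋n⦌)

/-- Second-variable "last vertex" restriction `C(m,n) ⟶ C(m,0)`. -/
def lv (m n : ℕ) : (C.obj (op ⦋m⦌)).obj (op ⦋n⦌) ⟶ (C.obj (op ⦋m⦌)).obj (op ⦋0⦌) :=
  (C.obj (op ⦋m⦌)).map (SimplexCategory.const ⦋0⦌ ⦋n⦌ (Fin.last n)).op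

/-- The family of corner squares. -/
def Q (m n : ℕ) : Prop := IsPullback (vz C m n) (lv C m n) (lv C 0 n) (vz C m 0)

lemma nat_comm {a a' b b' : ℕ} (φ : (⦋a'⦌ : SimplexCategory) ⟶ ⦋a⦌)
    (ψ : (⦋b'⦌ : SimplexCategory) ⟶ ⦋b⦌) :
    (C.obj (op ⦋a⦌)).map ψ.op ≫ (C.map φ.op).app (op ⦋b'⦌) =
    (C.map φ.op).app (op ⦋b⦌) ≫ (C.obj (op ⦋a'⦌)).map ψ.op :=
  (C.map φ.op).naturality ψ.op

lemma constLast_zero : SimplexCategory.const ⦋0⦌ ⦋0⦌ (Fin.last 0) = 𝟙 (⦋0⦌ : SimplexCategory) := by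
  rw [show (Fin.last 0) = (0 : Fin 1) from rfl, const_eq_id]

lemma Q_zero_m (n : ℕ) : Q C 0 n := by
  have h0 : ∀ k : ℕ, vz C 0 k = 𝟙 _ := fun k => by simp [vz, const_eq_id]
  unfold Q
  rw [h0 n, h0 0]
  exact IsPullback.of_horiz_isIso ⟨by simp⟩

lemma Q_zero_n (m : ℕ) : Q C m 0 := by
  have h0 : ∀ k : ℕ, lv C k 0 = 𝟙 _ := fun k => by simp [lv, constLast_zero]
  unfold Q
  rw [h0 m, h0 0]
  exact IsPullback.of_vert_isIso ⟨by simp⟩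

lemma constLast_comp_delta0 (j : ℕ) :
    SimplexCategory.const ⦋0⦌ ⦋j + 1⦌ (Fin.last (j + 1)) ≫ δ (0 : Fin (j + 3)) =
    SimplexCategory.const ⦋0⦌ ⦋j + 2⦌ (Fin.last (j + 2)) := by
  rw [const_comp]; congr 1

lemma const_comp_mkOfLe (j : ℕ) (h : (0 : Fin (j + 3)) ≤ 1) :
    SimplexCategory.const ⦋0⦌ ⦋1⦌ 0 ≫ SimplexCategory.mkOfLe (0 : Fin (j + 3)) 1 h =
    SimplexCategory.const ⦋0⦌ ⦋j + 2⦌ 0 := by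
  rw [const_comp]; rfl

lemma delta1_eq : (δ (1 : Fin 2) : (⦋0⦌ : SimplexCategory) ⟶ ⦋1⦌) =
    SimplexCategory.const ⦋0⦌ ⦋1⦌ 0 := by
  rw [eq_const_of_zero (δ (1 : Fin 2))]; rfl

lemma delta0_eq : (δ (0 : Fin 2) : (⦋0⦌ : SimplexCategory) ⟶ ⦋1⦌) =
    SimplexCategory.const ⦋0⦌ ⦋1⦌ (Fin.last 1) := by
  rw [eq_const_of_zero (δ (0 : Fin 2))]; rfl

/-- The inductive step in the second variable, along the first row. -/
lemma Q_one_row [HasFiniteLimits S] (hC : IsDouble C) (h11 : Q C 1 1) : ∀ n, Q C 1 n := by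
  intro n
  induction n with
  | zero => exact Q_zero_n C 1
  | succ k ih =>
    cases k with
    | zero => exact h11
    | succ j =>
      -- goal : Q C 1 (j + 2), ih : Q C 1 (j + 1)
      have segX : IsPullback
          ((C.obj (op ⦋1⦌)).map (SimplexCategory.mkOfLe (0 : Fin (j + 3)) 1
            (by simp [Fin.le_def])).op)
          ((C.obj (op ⦋1⦌)).map (SimplexCategory.δ (0 : Fin (j + 3))).op)
          ((C.obj (op ⦋1⦌)).map (SimplexCategory.δ (0 : Fin 2)).op)
          ((C.obj (op ⦋1⦌)).map (SimplexCategory.const ⦋0⦌ ⦋j + 1⦌ 0).op) := (hC.1 1).1 j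
      have segY : IsPullback
          ((C.obj (op ⦋0⦌)).map (SimplexCategory.mkOfLe (0 : Fin (j + 3)) 1
            (by simp [Fin.le_def])).op)
          ((C.obj (op ⦋0⦌)).map (SimplexCategory.δ (0 : Fin (j + 3))).op)
          ((C.obj (op ⦋0⦌)).map (SimplexCategory.δ (0 : Fin 2)).op)
          ((C.obj (op ⦋0⦌)).map (SimplexCategory.const ⦋0⦌ ⦋j + 1⦌ 0).op) := (hC.1 0).1 j
      rw [delta0_eq] at segX segY
      have hB : IsPullback (vz C 1 1)
          ((C.obj (op ⦋1⦌)).map (SimplexCategory.const ⦋0⦌ ⦋1⦌ (Fin.last 1)).op)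
          ((C.obj (op ⦋0⦌)).map (SimplexCategory.const ⦋0⦌ ⦋1⦌ (Fin.last 1)).op)
          (vz C 1 0) := h11
      have step : IsPullback (vz C 1 (j + 2))
          ((C.obj (op ⦋1⦌)).map (SimplexCategory.δ (0 : Fin (j + 3))).op)
          ((C.obj (op ⦋0⦌)).map (SimplexCategory.δ (0 : Fin (j + 3))).op)
          (vz C 1 (j + 1)) :=
        cospan_pullback segX.flip segY.flip hB
          (nat_comm C _ _).symm (nat_comm C _ _).symm (nat_comm C _ _)
      have paste := step.paste_vert (ih : IsPullback (vz C 1 (j+1)) (lv C 1 (j+1)) (lv C 0 (j+1)) (vz C 1 0))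
      have comp1 : (C.obj (op ⦋1⦌)).map (SimplexCategory.δ (0 : Fin (j + 3))).op ≫
          lv C 1 (j + 1) = lv C 1 (j + 2) := by
        rw [lv, lv, ← Functor.map_comp, ← op_comp, constLast_comp_delta0]
      have comp0 : (C.obj (op ⦋0⦌)).map (SimplexCategory.δ (0 : Fin (j + 3))).op ≫
          lv C 0 (j + 1) = lv C 0 (j + 2) := by
        rw [lv, lv, ← Functor.map_comp, ← op_comp, constLast_comp_delta0]
      rw [comp1, comp0] at paste
      exact paste

/-- The inductive step in the first variable. -/
lemma Q_all [HasFiniteLimits S] (hC : IsDouble C) (h1 : ∀ n, Q C 1 n) : ∀ m n, Q C m n := by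
  intro m
  induction m with
  | zero => exact fun n => Q_zero_m C n
  | succ k ih =>
    cases k with
    | zero => exact h1
    | succ j =>
      intro n
      -- ih : ∀ n, Q C (j+1) n, goal : Q C (j+2) n
      have segn : IsPullback
          ((C.map (SimplexCategory.mkOfLe (0 : Fin (j + 3)) 1
            (by simp [Fin.le_def])).op).app (op ⦋n⦌))
          ((C.map (SimplexCategory.δ (0 : Fin (j + 3))).op).app (op ⦋n⦌))
          ((C.map (SimplexCategory.δ (0 : Fin 2)).op).app (op ⦋n⦌))
          ((C.map (SimplexCategory.const ⦋0⦌ ⦋j + 1⦌ 0).op).app (op ⦋n⦌)) := (hC.2 n).1 j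
      have seg0 : IsPullback
          ((C.map (SimplexCategory.mkOfLe (0 : Fin (j + 3)) 1
            (by simp [Fin.le_def])).op).app (op ⦋0⦌))
          ((C.map (SimplexCategory.δ (0 : Fin (j + 3))).op).app (op ⦋0⦌))
          ((C.map (SimplexCategory.δ (0 : Fin 2)).op).app (op ⦋0⦌))
          ((C.map (SimplexCategory.const ⦋0⦌ ⦋j + 1⦌ 0).op).app (op ⦋0⦌)) := (hC.2 0).1 j
      have hB : IsPullback (lv C (j + 1) n)
          ((C.map (SimplexCategory.const ⦋0⦌ ⦋j + 1⦌ 0).op).app (op ⦋n⦌))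
          ((C.map (SimplexCategory.const ⦋0⦌ ⦋j + 1⦌ 0).op).app (op ⦋0⦌))
          (lv C 0 n) := (ih n).flip
      have step : IsPullback (lv C (j + 2) n)
          ((C.map (SimplexCategory.mkOfLe (0 : Fin (j + 3)) 1
            (by simp [Fin.le_def])).op).app (op ⦋n⦌))
          ((C.map (SimplexCategory.mkOfLe (0 : Fin (j + 3)) 1
            (by simp [Fin.le_def])).op).app (op ⦋0⦌))
          (lv C 1 n) :=
        cospan_pullback segn seg0 hB
          (nat_comm C _ _) (nat_comm C _ _) (nat_comm C _ _).symm
      have paste := step.paste_vert ((h1 n).flip :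
        IsPullback (lv C 1 n) (vz C 1 n) (vz C 1 0) (lv C 0 n))
      have compn : (C.map (SimplexCategory.mkOfLe (0 : Fin (j + 3)) 1
          (by simp [Fin.le_def])).op).app (op ⦋n⦌) ≫ vz C 1 n = vz C (j + 2) n := by
        rw [vz, vz, ← NatTrans.comp_app, ← Functor.map_comp, ← op_comp, const_comp_mkOfLe]
      have comp0 : (C.map (SimplexCategory.mkOfLe (0 : Fin (j + 3)) 1
          (by simp [Fin.le_def])).op).app (op ⦋0⦌) ≫ vz C 1 0 = vz C (j + 2) 0 := by
        rw [vz, vz, ← NatTrans.comp_app, ← Functor.map_comp, ← op_comp, const_comp_mkOfLe]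
      rw [compn, comp0] at paste
      exact paste.flip

end Aux

/-- For a double ∞-category `C`, the following are equivalent:
(1) the corner square formed by `C(id,d₀)` and `C(d₁,id)` is cartesian;
(2) `C(–,d₀) : C(–,1) → C(–,0)` is a left fibration;
(3) `C(d₁,–) : C(1,–) → C(0,–)` is a right fibration;
(4) `C(–,d₀) : C(–,n) → C(–,0)` is a left fibration for all `n ≥ 0`;
(5) `C(dₙ,–) : C(n,–) → C(0,–)` is a right fibration for all `n ≥ 0`. -/
theorem factorization_double_category_tfae {S : Type u} [Category.{v} S] [HasFiniteLimits S]
    (C : BiSp S) (hC : IsDouble C) :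
    List.TFAE
      [ FactSquare C,
        IsLeftFib (colMap C (δ (0 : Fin 2))),
        IsRightFib (rowMap C (δ (1 : Fin 2))),
        ∀ n : ℕ, IsLeftFib (colMap C (SimplexCategory.const ⦋0⦌ ⦋n⦌ (Fin.last n))),
        ∀ n : ℕ, IsRightFib (rowMap C (SimplexCategory.const ⦋0⦌ ⦋n⦌ 0)) ] := by
  tfae_have 1 → 5
  | h => by
    have h11 : Q C 1 1 := by
      unfold FactSquare at h
      rw [delta1_eq, delta0_eq] at h
      exact IsPullback.flip h
    have hQ : ∀ m n : ℕ, Q C m n := Q_all C hC (Q_one_row C hC h11)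
    exact fun n m => hQ n m
  tfae_have 5 → 4
  | h => by
    have hQ : ∀ m n : ℕ, Q C m n := fun m n => h m n
    exact fun n m => IsPullback.flip (hQ m n)
  tfae_have 4 → 2
  | h => by
    rw [delta0_eq]
    exact h 1
  tfae_have 2 → 3
  | h => by
    rw [delta0_eq] at h
    have h11 : Q C 1 1 := IsPullback.flip (h 1)
    rw [delta1_eq]
    exact fun n => Q_one_row C hC h11 n
  tfae_have 3 → 1
  | h => by
    rw [delta1_eq] at h
    have h11 : Q C 1 1 := h 1
    unfold FactSquare
    rw [delta1_eq, delta0_eq]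
    exact IsPullback.flip h11
  tfae_finish

end Paper
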